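/- arXiv:2105.05319 — 2 statements merged into one kernel-verified Lean document; each statement's English description precedes it below -/
import Mathlib

section
/- Let A = ⊕_{i ∈ ℤ} A_i be a commutative ring with a ℤ-grading such that A_i = 0 for all i > 0. Then every idempotent element e ∈ A (i.e. e² = e) is homogeneous of degree 0, that is, e ∈ A_0. In particular, if moreover A_0 has no nontrivial idempotents, then neither does A. -/
/-!
Modulo the ideal of elements of negative degree, the degree-`0` component is a ring
homomorphism, so the degree-`0` part `e₀` of an idempotent `e` is again idempotent. The
difference `f = e - e₀` of two commuting idempotents satisfies `f ^ 3 = f`, hence `f ^ 2` is an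
idempotent living in negative degrees. Such an idempotent vanishes: its top-degree component
would have to equal the component of `f ^ 2 * f ^ 2` in that degree, which is zero. Then
`f = f * f ^ 2 = 0`.
-/

open DirectSum

section Ring

variable {A : Type*} [Ring A] {𝒜 : ℤ → AddSubgroup A} [GradedRing 𝒜]

theorem IsIdempotentElem.eq_zero_of_decompose_nonneg_eq_zero {g : A} (hg : IsIdempotentElem g)
    (h : ∀ i, 0 ≤ i → decompose 𝒜 g i = 0) : g = 0 := by
  classical
  by_contra hg0
  have hne : (decompose 𝒜 g).support.Nonempty := Finset.nonempty_iff_ne_empty.mpr fun h =>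
    hg0 <| (decompose 𝒜).injective <|
      (DFinsupp.support_eq_empty.mp h).trans (decompose_zero 𝒜).symm
  obtain ⟨n, hn, hmax⟩ := (decompose 𝒜 g).support.exists_max_image id hne
  have hsupp : ∀ j ∈ (decompose 𝒜 g).support, j < 0 := fun j hj =>
    not_le.mp fun h0 => DFinsupp.mem_support_iff.mp hj (h j h0)
  apply DFinsupp.mem_support_iff.mp hn
  apply Subtype.ext
  rw [← hg.eq, decompose_mul, coe_mul_apply, ZeroMemClass.coe_zero]
  refine Finset.sum_eq_zero fun ij hij => absurd hij ?_
  simp only [Finset.mem_filter, Finset.mem_product, not_and]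
  rintro ⟨hi, hj⟩ hsum
  have hi_le : ij.1 ≤ n := hmax _ hi
  have hj_neg : ij.2 < 0 := hsupp _ hj
  omega

theorem decompose_eq_zero_of_pos (hneg : ∀ i : ℤ, 0 < i → 𝒜 i = ⊥) (x : A) {i : ℤ} (hi : 0 < i) :
    decompose 𝒜 x i = 0 :=
  Subtype.ext <| AddSubgroup.mem_bot.mp <| hneg i hi ▸ (decompose 𝒜 x i).2

theorem coe_decompose_mul_zero_of_nonpos (hneg : ∀ i : ℤ, 0 < i → 𝒜 i = ⊥) (a b : A) :
    (decompose 𝒜 (a * b) 0 : A) = decompose 𝒜 a 0 * decompose 𝒜 b 0 := by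
  classical
  have hsupp : ∀ x : A, ∀ i ∈ (decompose 𝒜 x).support, i ≤ 0 := fun x i hi =>
    not_lt.mp fun h => DFinsupp.mem_support_iff.mp hi (decompose_eq_zero_of_pos hneg x h)
  rw [decompose_mul, coe_mul_apply]
  refine Finset.sum_eq_single ((0 : ℤ), (0 : ℤ)) ?_ ?_
  · rintro ⟨i, j⟩ hij hne
    simp only [Finset.mem_filter, Finset.mem_product] at hij
    have hi := hsupp a i hij.1.1
    have hj := hsupp b j hij.1.2
    exact absurd (Prod.ext (by omega) (by omega)) hne
  · intro h00
    simp only [Finset.mem_filter, Finset.mem_product, add_zero, and_true, not_and_or,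
      DFinsupp.mem_support_iff, not_not] at h00
    rcases h00 with ha | hb
    · simp [ha]
    · simp [hb]

end Ring

section CommRing

variable {A : Type*} [CommRing A]

theorem IsIdempotentElem.sub_pow_three {e e' : A} (he : IsIdempotentElem e)
    (he' : IsIdempotentElem e') : (e - e') ^ 3 = e - e' := by
  linear_combination (e + 1 - 3 * e') * he.eq + (3 * e - e' - 1) * he'.eq

theorem IsIdempotentElem.mem_zero_of_nonpos_grading {𝒜 : ℤ → AddSubgroup A} [GradedRing 𝒜]
    (hneg : ∀ i : ℤ, 0 < i → 𝒜 i = ⊥) {e : A} (he : IsIdempotentElem e) : e ∈ 𝒜 0 := by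
  set e₀ : A := ↑(decompose 𝒜 e 0)
  have he₀ : IsIdempotentElem e₀ := by
    rw [IsIdempotentElem, ← coe_decompose_mul_zero_of_nonpos hneg, he.eq]
  set f := e - e₀
  have hf₀ : (decompose 𝒜 f 0 : A) = 0 := by simp [f, decompose_sub, e₀]
  have hf3 : f ^ 3 = f := he.sub_pow_three he₀
  have hf2 : IsIdempotentElem (f ^ 2) := by
    calc f ^ 2 * f ^ 2 = f ^ 3 * f := by ring
      _ = f ^ 2 := by rw [hf3, sq]
  have hf2_zero : f ^ 2 = 0 := hf2.eq_zero_of_decompose_nonneg_eq_zero fun i hi => by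
    obtain rfl | hi := hi.eq_or_lt
    · exact Subtype.ext <| by rw [sq, coe_decompose_mul_zero_of_nonpos hneg, hf₀, zero_mul]; rfl
    · exact decompose_eq_zero_of_pos hneg _ hi
  have hf : f = 0 := by rw [← hf3, pow_succ', hf2_zero, mul_zero]
  rw [sub_eq_zero.mp hf]
  exact (decompose 𝒜 e 0).2

end CommRing

/-- Let `A = ⊕_{i ∈ ℤ} A_i` be a commutative ring with a ℤ-grading such that `A_i = 0` for
all `i > 0`. Then every idempotent `e ∈ A` is homogeneous of degree `0`, i.e. `e ∈ A_0`.
In particular, if `A_0` has no nontrivial idempotents, then neither does `A`. -/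
theorem idempotent_mem_degree_zero_of_nonpositive_grading
    {A : Type*} [CommRing A] (𝒜 : ℤ → AddSubgroup A) [GradedRing 𝒜]
    (hneg : ∀ i : ℤ, 0 < i → 𝒜 i = ⊥) :
    (∀ e : A, e * e = e → e ∈ 𝒜 0) ∧
      ((∀ a ∈ 𝒜 0, a * a = a → a = 0 ∨ a = 1) →
        ∀ a : A, a * a = a → a = 0 ∨ a = 1) := by
  have hdeg : ∀ e : A, e * e = e → e ∈ 𝒜 0 := fun e he =>
    IsIdempotentElem.mem_zero_of_nonpos_grading hneg he
  exact ⟨hdeg, fun h a ha => h a (hdeg a ha) ha⟩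
end

section
/- Let k be a perfect field of characteristic p, let W(k) be its ring of Witt vectors, and let A = W(k)[[u]]. Let M be a finitely generated A-module such that: (i) M[1/p] is a free A[1/p]-module, and (ii) M ⊗_A W(k) = M/uM is p-torsion free (equivalently, free over W(k)). Then M is a free A-module. -/
/-!
Write `A = W(k)⟦u⟧`. Since `u` lies in the Jacobson radical of the Noetherian ring `A`, the module
`M` is free as soon as `u` is `M`-regular and `M/uM` is free over `A/(u) ≅ W(k)`
(`Module.free_quotSMulTop_iff_free`). The second condition holds because `W(k)` is a DVR with
uniformizer `p` and `M/uM` is finite and `p`-torsion free. For the first, `u` acts injectively on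
the torsion-free `A[1/p]`-module `M[1/p]`, so it suffices that `M → M[1/p]` is injective. Its
kernel `T` is the `p`-power torsion of `M`; as `M/uM` has no `p`-torsion, `T ⊆ uM`, and then
`T = uT` because `u` is regular on `M[1/p]`. Nakayama gives `T = 0`.
-/

open Function Pointwise

section TorsionFree

variable {R M : Type*} [CommRing R] [AddCommGroup M] [Module R M]

lemma eq_zero_of_pow_smul_eq_zero {s : R} (hs : ∀ y : M, s • y = 0 → y = 0) {y : M} {n : ℕ}
    (h : s ^ n • y = 0) : y = 0 := by
  induction n with
  | zero => simpa using h
  | succ n ih => exact ih (hs _ (by rwa [← mul_smul, ← pow_succ']))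

lemma isTorsionFree_of_forall_eq_unit_mul_pow [IsDomain R] {π : R}
    (hR : ∀ r ≠ 0, ∃ (u : Rˣ) (n : ℕ), r = u * π ^ n) (hM : ∀ y : M, π • y = 0 → y = 0) :
    Module.IsTorsionFree R M where
  isSMulRegular r hr := by
    obtain ⟨u, n, rfl⟩ := hR r hr.ne_zero
    refine IsSMulRegular.of_right_eq_zero_of_smul fun y hy ↦ ?_
    rw [mul_smul, ← Units.smul_def, smul_eq_zero_iff_eq] at hy
    exact eq_zero_of_pow_smul_eq_zero hM hy

end TorsionFree

lemma IsDiscreteValuationRing.exists_eq_unit_mul_pow_of_surjective {R Q : Type*} [CommRing R]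
    [IsDomain R] [IsDiscreteValuationRing R] [CommRing Q] {f : R →+* Q} (hf : Surjective f)
    {ϖ : R} (hϖ : Irreducible ϖ) (q : Q) (hq : q ≠ 0) : ∃ (u : Qˣ) (n : ℕ), q = u * f ϖ ^ n := by
  obtain ⟨r, rfl⟩ := hf q
  have hr : r ≠ 0 := by
    rintro rfl
    exact hq (map_zero f)
  obtain ⟨n, u, rfl⟩ := eq_unit_mul_pow_irreducible hr hϖ
  exact ⟨u.map f, n, by simp⟩

section Localization

variable {R M : Type*} [CommRing R] [AddCommGroup M] [Module R M]

lemma isSMulRegular_localizedModule [IsDomain R] {S : Submonoid R} (hS : S ≤ nonZeroDivisors R)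
    [Module.IsTorsionFree (Localization S) (LocalizedModule S M)] {x : R} (hx : x ≠ 0) :
    IsSMulRegular (LocalizedModule S M) x := by
  have : IsDomain (Localization S) := IsLocalization.isDomain_localization hS
  have hx' : algebraMap R (Localization S) x ≠ 0 :=
    (map_ne_zero_iff _ (IsLocalization.injective _ hS)).mpr hx
  exact (IsSMulRegular.of_ne_zero hx').of_map _ (fun m ↦ algebraMap_smul _ x m)

lemma injective_mkLinearMap_powers_of_isSMulRegular [IsNoetherian R M] {x s : R}
    (hx : x ∈ (⊥ : Ideal R).jacobson)
    (hreg : IsSMulRegular (LocalizedModule (Submonoid.powers s) M) x)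
    (htf : ∀ y : QuotSMulTop x M, s • y = 0 → y = 0) :
    Injective (LocalizedModule.mkLinearMap (Submonoid.powers s) M) := by
  set K := LinearMap.ker (LocalizedModule.mkLinearMap (Submonoid.powers s) M)
  suffices K ≤ x • K by
    rw [← LinearMap.ker_eq_bot]
    refine Submodule.eq_bot_of_le_smul_of_le_jacobson_bot (Ideal.span {x}) K
      (IsNoetherian.noetherian K) ?_ (by simpa using hx)
    rwa [Submodule.ideal_span_singleton_smul]
  intro m hm
  obtain ⟨_, ⟨n, rfl⟩, hn⟩ := LocalizedModule.mem_ker_mkLinearMap_iff.mp hm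
  have hmx : m ∈ x • (⊤ : Submodule R M) := by
    rw [← Submodule.Quotient.mk_eq_zero]
    exact eq_zero_of_pow_smul_eq_zero htf (by rw [← Submodule.Quotient.mk_smul, hn]; rfl)
  obtain ⟨m', -, rfl⟩ := (Submodule.mem_smul_pointwise_iff_exists _ _ _).mp hmx
  refine Submodule.smul_mem_pointwise_smul _ _ _ (hreg.right_eq_zero_of_smul ?_)
  rwa [LinearMap.mem_ker, map_smul] at hm

end Localization

namespace PowerSeries

variable {R : Type*} [CommRing R]

lemma X_mem_jacobson_bot : (X : R⟦X⟧) ∈ (⊥ : Ideal R⟦X⟧).jacobson :=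
  Ideal.mem_jacobson_bot.mpr fun f ↦ isUnit_iff_constantCoeff.mpr (by simp)

lemma surjective_quotient_mk_span_X_comp_C :
    Surjective ((Ideal.Quotient.mk (Ideal.span {(X : R⟦X⟧)})).comp (C (R := R))) := by
  intro q
  obtain ⟨f, rfl⟩ := Ideal.Quotient.mk_surjective q
  refine ⟨constantCoeff f, (Ideal.Quotient.eq.mpr (Ideal.mem_span_singleton.mpr ?_)).symm⟩
  exact X_dvd_iff.mpr (by simp)

variable [IsDomain R] [IsDiscreteValuationRing R]

lemma free_quotSMulTop_X {ϖ : R} (hϖ : Irreducible ϖ) (M : Type*) [AddCommGroup M]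
    [Module R⟦X⟧ M] [Module.Finite R⟦X⟧ M]
    (htf : ∀ y : QuotSMulTop (X : R⟦X⟧) M, C ϖ • y = 0 → y = 0) :
    Module.Free (R⟦X⟧ ⧸ Ideal.span {(X : R⟦X⟧)}) (QuotSMulTop (X : R⟦X⟧) M) := by
  have := span_X_isPrime (R := R)
  have hf := surjective_quotient_mk_span_X_comp_C (R := R)
  have := IsPrincipalIdealRing.of_surjective _ hf
  have := Module.Finite.of_restrictScalars_finite R⟦X⟧ (R⟦X⟧ ⧸ Ideal.span {(X : R⟦X⟧)})
    (QuotSMulTop (X : R⟦X⟧) M)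
  have := isTorsionFree_of_forall_eq_unit_mul_pow (M := QuotSMulTop (X : R⟦X⟧) M)
    (IsDiscreteValuationRing.exists_eq_unit_mul_pow_of_surjective hf hϖ) htf
  exact Module.free_of_finite_type_torsion_free'

theorem free_of_isTorsionFree_localizedModule_of_quotSMulTop_X {ϖ : R} (hϖ : Irreducible ϖ)
    (M : Type*) [AddCommGroup M] [Module R⟦X⟧ M] [Module.Finite R⟦X⟧ M]
    [Module.IsTorsionFree (Localization (Submonoid.powers (C ϖ)))
      (LocalizedModule (Submonoid.powers (C ϖ)) M)]
    (htf : ∀ y : QuotSMulTop (X : R⟦X⟧) M, C ϖ • y = 0 → y = 0) :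
    Module.Free R⟦X⟧ M := by
  have : Module.FinitePresentation R⟦X⟧ M := Module.finitePresentation_of_finite _ _
  have hC : C ϖ ≠ 0 := (map_ne_zero_iff _ C_injective).mpr hϖ.ne_zero
  have hregLoc : IsSMulRegular (LocalizedModule (Submonoid.powers (C ϖ)) M) (X : R⟦X⟧) :=
    isSMulRegular_localizedModule (powers_le_nonZeroDivisors_of_noZeroDivisors hC) X_ne_zero
  have hinj : Injective (LocalizedModule.mkLinearMap (Submonoid.powers (C ϖ)) M) :=
    injective_mkLinearMap_powers_of_isSMulRegular X_mem_jacobson_bot hregLoc htf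
  have hreg : IsSMulRegular M (X : R⟦X⟧) := fun m m' h ↦ by
    refine hinj (hregLoc ?_)
    simp only [← map_smul]
    exact congrArg _ h
  exact (Module.free_quotSMulTop_iff_free R⟦X⟧ M X_mem_jacobson_bot hreg).mp
    (free_quotSMulTop_X hϖ M htf)

end PowerSeries

/-- Let `k` be a perfect field of characteristic `p`, `W(k)` its ring of Witt vectors and
`A = W(k)⟦u⟧`.  Let `M` be a finitely generated `A`-module such that `M[1/p]` is free
over `A[1/p]` and `M/uM` is `p`-torsion free.  Then `M` is a free `A`-module. -/
theorem free_of_free_after_inverting_p_and_p_torsion_free_special_fiber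
    (p : ℕ) [Fact p.Prime] {k : Type*} [Field k] [CharP k p] [PerfectRing k p]
    (M : Type*) [AddCommGroup M]
    [Module (PowerSeries (WittVector p k)) M]
    [Module.Finite (PowerSeries (WittVector p k)) M]
    (hfree : Module.Free
      (Localization (Submonoid.powers ((p : PowerSeries (WittVector p k)))))
      (LocalizedModule (Submonoid.powers ((p : PowerSeries (WittVector p k)))) M))
    (htf : ∀ x : M ⧸ (Ideal.span {(PowerSeries.X : PowerSeries (WittVector p k))} •
        (⊤ : Submodule (PowerSeries (WittVector p k)) M)),
      (p : PowerSeries (WittVector p k)) • x = 0 → x = 0) :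
    Module.Free (PowerSeries (WittVector p k)) M := by
  rw [← map_natCast PowerSeries.C p] at hfree htf
  rw [Submodule.ideal_span_singleton_smul] at htf
  exact PowerSeries.free_of_isTorsionFree_localizedModule_of_quotSMulTop_X
    (WittVector.irreducible p) M htf
end
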